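/- Let Q ∈ ℝ^{q×n} have i.i.d. sparse Bernoulli entries with P(Q_{ij}=0)=1−1/s and P(Q_{ij}=±1)=1/(2s). Then for s ≥ 3, Var[vec((s/q)QᵀQ)] = ((s−3)₊/q) diag(vec(Iₙ)) + (1/q) I_{n²} + (1/q) K_{nn}. -/

import Mathlib

open Matrix MeasureTheory ProbabilityTheory

/-- Column-wise vectorization: `vec M (j, i) = M i j` (index pair = (column, row)). -/
def vec' {m n : ℕ} (M : Matrix (Fin m) (Fin n) ℝ) : Fin n × Fin m → ℝ := fun p => M p.2 p.1

theorem aux_scalar {α : Type*} [DecidableEq α] {s qr : ℝ} (hs : s ≠ 0) (hq : qr ≠ 0)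
    (a1 a2 b1 b2 : α) :
    (s / qr) ^ 2 *
        (qr * qr * ((if a2 = a1 then 1/s else 0) * if b2 = b1 then 1/s else 0) +
          qr *
            ((((if a2 = b2 then 1/s else 0) * if a1 = b1 then 1/s else 0) +
                (if a2 = b1 then 1/s else 0) * if a1 = b2 then 1/s else 0) +
              if a2 = a1 ∧ a2 = b2 ∧ a2 = b1 then 1/s - 3/s^2 else 0)) -
      (if a2 = a1 then 1 else 0) * (if b2 = b1 then (1:ℝ) else 0) =
    (((s - 3) / qr * if a1 = b1 ∧ a2 = b2 then if a2 = a1 then 1 else 0 else 0) +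
        qr⁻¹ * if a1 = b1 ∧ a2 = b2 then 1 else 0) +
      qr⁻¹ * if b2 = a1 ∧ b1 = a2 then 1 else 0 := by
  by_cases c1 : a2 = a1 <;> by_cases c3 : a2 = b2 <;> by_cases c4 : a1 = b1 <;>
    by_cases c5 : a2 = b1 <;> by_cases c6 : a1 = b2 <;> by_cases c2 : b2 = b1 <;>
    simp_all <;> first
    | (field_simp; ring1)
    | (split_ifs <;> simp_all)
    | (split_ifs <;> first | rfl | simp_all)
    | (rw [if_neg fun h => by simp_all]; field_simp; try ring1)
    | (intros; simp_all)
    | field_simp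


/-- For `Q ∈ ℝ^{q×n}` with i.i.d. sparse Bernoulli entries (`P(0)=1−1/s`, `P(±1)=1/(2s)`,
`s ≥ 3`), the covariance matrix of `vec((s/q)QᵀQ)` equals
`((s−3)/q) diag(vec Iₙ) + (1/q) I_{n²} + (1/q) K_{nn}`, where `K_{nn}` is the
commutation matrix. -/
theorem stmt8 {q n : ℕ} (hq : 0 < q) {Ω : Type*} [MeasurableSpace Ω] (μ : Measure Ω)
    [IsProbabilityMeasure μ]
    (s : ℝ) (hs : 3 ≤ s)
    (Q : Ω → Matrix (Fin q) (Fin n) ℝ)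
    (hmeas : ∀ k i, Measurable fun ω => Q ω k i)
    (hind : iIndepFun
      (fun (p : Fin q × Fin n) ω => Q ω p.1 p.2) μ)
    (hval : ∀ ω k i, Q ω k i = -1 ∨ Q ω k i = 0 ∨ Q ω k i = 1)
    (h1 : ∀ k i, μ {ω | Q ω k i = 1} = ENNReal.ofReal (1 / (2 * s)))
    (hm1 : ∀ k i, μ {ω | Q ω k i = -1} = ENNReal.ofReal (1 / (2 * s)))
    (h0 : ∀ k i, μ {ω | Q ω k i = 0} = ENNReal.ofReal (1 - 1 / s))
    (K : Matrix (Fin n × Fin n) (Fin n × Fin n) ℝ)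
    (hK : ∀ A : Matrix (Fin n) (Fin n) ℝ, K *ᵥ vec' A = vec' Aᵀ)
    (v : Ω → Fin n × Fin n → ℝ)
    (hv : ∀ ω, v ω = vec' ((s / (q : ℝ)) • ((Q ω)ᵀ * Q ω))) :
    ∀ a b : Fin n × Fin n,
      (∫ ω, v ω a * v ω b ∂μ) - (∫ ω, v ω a ∂μ) * ∫ ω, v ω b ∂μ =
        (((s - 3) / (q : ℝ)) • Matrix.diagonal (vec' (1 : Matrix (Fin n) (Fin n) ℝ)) +
          ((q : ℝ))⁻¹ • (1 : Matrix (Fin n × Fin n) (Fin n × Fin n) ℝ) +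
          ((q : ℝ))⁻¹ • K) a b := by
  have hs0 : (0:ℝ) < s := by linarith
  have hsne : s ≠ 0 := ne_of_gt hs0
  have hq0 : (0:ℝ) < (q:ℝ) := by exact_mod_cast hq
  have hqne : (q:ℝ) ≠ 0 := ne_of_gt hq0
  set X : Fin q × Fin n → Ω → ℝ := fun p ω => Q ω p.1 p.2 with hXdef
  have hXmeas : ∀ p, Measurable (X p) := fun p => hmeas p.1 p.2
  have hXval : ∀ (p : Fin q × Fin n) ω, X p ω = -1 ∨ X p ω = 0 ∨ X p ω = 1 :=
    fun p ω => hval ω p.1 p.2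
  have hXb : ∀ (p : Fin q × Fin n) ω, |X p ω| ≤ 1 := by
    intro p ω; rcases hXval p ω with h | h | h <;> rw [h] <;> norm_num
  have hindX : iIndepFun X μ := hind
  have hInt : ∀ F : Ω → ℝ, Measurable F → (∀ ω, |F ω| ≤ 1) → Integrable F μ := by
    intro F hF hb
    exact (integrable_const (1:ℝ)).mono' hF.aestronglyMeasurable
      (Filter.Eventually.of_forall (by simpa [Real.norm_eq_abs] using hb))
  -- moments
  have hmom : ∀ (p : Fin q × Fin n) (t : ℕ), 1 ≤ t →
      ∫ ω, X p ω ^ t ∂μ = (1 + (-1:ℝ)^t) / (2*s) := by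
    intro p t ht
    have hA : MeasurableSet {ω | Q ω p.1 p.2 = 1} := by
      have := hmeas p.1 p.2 (measurableSet_singleton (1:ℝ))
      simpa [Set.preimage] using this
    have hB : MeasurableSet {ω | Q ω p.1 p.2 = -1} := by
      have := hmeas p.1 p.2 (measurableSet_singleton (-1:ℝ))
      simpa [Set.preimage] using this
    have hpt : (fun ω => X p ω ^ t) = fun ω =>
        Set.indicator {ω | Q ω p.1 p.2 = 1} (1 : Ω → ℝ) ω
        + (-1:ℝ)^t * Set.indicator {ω | Q ω p.1 p.2 = -1} (1 : Ω → ℝ) ω := by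
      funext ω
      have hXQ : X p ω = Q ω p.1 p.2 := rfl
      rcases hval ω p.1 p.2 with h | h | h
      · simp only [Set.indicator_apply, Set.mem_setOf_eq, hXQ, h, Pi.one_apply]
        norm_num
      · simp only [Set.indicator_apply, Set.mem_setOf_eq, hXQ, h, Pi.one_apply,
          zero_pow (show t ≠ 0 by omega)]
        norm_num
      · simp only [Set.indicator_apply, Set.mem_setOf_eq, hXQ, h, Pi.one_apply]
        norm_num
    have hIA : Integrable ({ω | Q ω p.1 p.2 = 1}.indicator (1 : Ω → ℝ)) μ :=
      (integrable_const 1).indicator hA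
    have hIB : Integrable ({ω | Q ω p.1 p.2 = -1}.indicator (1 : Ω → ℝ)) μ :=
      (integrable_const 1).indicator hB
    rw [hpt, integral_add hIA (hIB.const_mul _),
      integral_const_mul, integral_indicator_one hA, integral_indicator_one hB,
      measureReal_def, measureReal_def, h1 p.1 p.2, hm1 p.1 p.2, ENNReal.toReal_ofReal (by positivity)]
    ring
  have hIntPow : ∀ (p : Fin q × Fin n) (t : ℕ), Integrable (fun ω => X p ω ^ t) μ := by
    intro p t
    refine hInt _ ((hXmeas p).pow_const t) fun ω => ?_
    rw [abs_pow]; exact pow_le_one₀ (abs_nonneg _) (hXb p ω)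
  have hInt2 : ∀ p r : Fin q × Fin n, Integrable (fun ω => X p ω * X r ω) μ := by
    intro p r
    refine hInt _ ((hXmeas p).mul (hXmeas r)) fun ω => ?_
    rw [abs_mul]
    exact mul_le_one₀ (hXb p ω) (abs_nonneg _) (hXb r ω)
  have hInt4 : ∀ p1 p2 p3 p4 : Fin q × Fin n,
      Integrable (fun ω => X p1 ω * X p2 ω * X p3 ω * X p4 ω) μ := by
    intro p1 p2 p3 p4
    refine hInt _ ((((hXmeas p1).mul (hXmeas p2)).mul (hXmeas p3)).mul (hXmeas p4))
      fun ω => ?_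
    rw [abs_mul, abs_mul, abs_mul]
    exact mul_le_one₀ (mul_le_one₀ (mul_le_one₀ (hXb p1 ω) (abs_nonneg _) (hXb p2 ω))
      (abs_nonneg _) (hXb p3 ω)) (abs_nonneg _) (hXb p4 ω)
  have m1 : ∀ p, ∫ ω, X p ω ∂μ = 0 := by
    intro p
    have := hmom p 1 le_rfl
    norm_num at this
    simpa using this
  have hM2 : ∀ p r : Fin q × Fin n, ∫ ω, X p ω * X r ω ∂μ = if p = r then 1/s else 0 := by
    intro p r
    by_cases h : p = r
    · subst h
      rw [if_pos rfl, show (fun ω => X p ω * X p ω) = fun ω => X p ω ^ 2 from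
        funext fun ω => (pow_two _).symm, hmom p 2 (by norm_num)]
      norm_num
      field_simp
    · rw [if_neg h]
      have h2 := IndepFun.integral_mul_eq_mul_integral (hindX.indepFun h)
        (hInt _ (hXmeas p) (hXb p)).aestronglyMeasurable (hInt _ (hXmeas r) (hXb r)).aestronglyMeasurable
      calc ∫ ω, X p ω * X r ω ∂μ = (∫ ω, X p ω ∂μ) * ∫ ω, X r ω ∂μ := h2
      _ = 0 := by rw [m1, m1]; ring
  -- independence helpers
  have hIP : ∀ (p r : Fin q × Fin n) (t u : ℕ), p ≠ r →
      ∫ ω, X p ω ^ t * X r ω ^ u ∂μ = (∫ ω, X p ω ^ t ∂μ) * ∫ ω, X r ω ^ u ∂μ := by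
    intro p r t u h
    exact IndepFun.integral_mul_eq_mul_integral ((hindX.indepFun h).comp (measurable_id.pow_const t)
      (measurable_id.pow_const u)) (hIntPow p t).aestronglyMeasurable (hIntPow r u).aestronglyMeasurable
  have hIPmul : ∀ p1 p2 p3 p4 : Fin q × Fin n, p1 ≠ p3 → p1 ≠ p4 → p2 ≠ p3 → p2 ≠ p4 →
      ∫ ω, X p1 ω * X p2 ω * (X p3 ω * X p4 ω) ∂μ =
        (∫ ω, X p1 ω * X p2 ω ∂μ) * ∫ ω, X p3 ω * X p4 ω ∂μ := by
    intro p1 p2 p3 p4 h13 h14 h23 h24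
    exact IndepFun.integral_mul_eq_mul_integral (hindX.indepFun_mul_mul hXmeas p1 p2 p3 p4 h13 h14 h23 h24)
      (hInt2 p1 p2).aestronglyMeasurable (hInt2 p3 p4).aestronglyMeasurable
  have m2 : ∀ p, ∫ ω, X p ω ^ 2 ∂μ = 1/s := by
    intro p
    rw [hmom p 2 (by norm_num), show (1 + (-1:ℝ)^2) = 2 by norm_num]
    field_simp
  have m3 : ∀ p, ∫ ω, X p ω ^ 3 ∂μ = 0 := by
    intro p
    rw [hmom p 3 (by norm_num)]
    norm_num
  have m4 : ∀ p, ∫ ω, X p ω ^ 4 ∂μ = 1/s := by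
    intro p
    rw [hmom p 4 (by norm_num), show (1 + (-1:ℝ)^4) = 2 by norm_num]
    field_simp
  have hM4 : ∀ p1 p2 p3 p4 : Fin q × Fin n,
      ∫ ω, X p1 ω * X p2 ω * X p3 ω * X p4 ω ∂μ =
        (if p1 = p2 then 1/s else 0) * (if p3 = p4 then 1/s else 0)
        + (if p1 = p3 then 1/s else 0) * (if p2 = p4 then 1/s else 0)
        + (if p1 = p4 then 1/s else 0) * (if p2 = p3 then 1/s else 0)
        + (if p1 = p2 ∧ p1 = p3 ∧ p1 = p4 then 1/s - 3/s^2 else 0) := by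
    intro p1 p2 p3 p4
    by_cases h12 : p1 = p2
    · subst h12
      by_cases h13 : p1 = p3
      · subst h13
        by_cases h14 : p1 = p4
        · subst h14
          rw [show (fun ω => X p1 ω * X p1 ω * X p1 ω * X p1 ω)
              = fun ω => X p1 ω ^ 4 from funext fun ω => by ring, m4]
          simp only [if_pos rfl, and_self, if_true]
          field_simp
          ring
        · rw [show (fun ω => X p1 ω * X p1 ω * X p1 ω * X p4 ω)
              = fun ω => X p1 ω ^ 3 * X p4 ω ^ 1 from funext fun ω => by ring,
            hIP p1 p4 3 1 h14, m3, zero_mul]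
          simp [h14]
      · by_cases h14 : p1 = p4
        · subst h14
          rw [show (fun ω => X p1 ω * X p1 ω * X p3 ω * X p1 ω)
              = fun ω => X p1 ω ^ 3 * X p3 ω ^ 1 from funext fun ω => by ring,
            hIP p1 p3 3 1 h13, m3, zero_mul]
          have h31 : ¬ p3 = p1 := fun h => h13 h.symm
          simp [h13, h31]
        · by_cases h34 : p3 = p4
          · subst h34
            rw [show (fun ω => X p1 ω * X p1 ω * X p3 ω * X p3 ω)
                = fun ω => X p1 ω ^ 2 * X p3 ω ^ 2 from funext fun ω => by ring,
              hIP p1 p3 2 2 h13, m2, m2]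
            simp [h13, h14]
          · rw [show (fun ω => X p1 ω * X p1 ω * X p3 ω * X p4 ω)
                = fun ω => X p1 ω * X p1 ω * (X p3 ω * X p4 ω) from funext fun ω => by ring,
              hIPmul p1 p1 p3 p4 h13 h14 h13 h14, hM2 p3 p4, if_neg h34, mul_zero]
            simp [h13, h14, h34]
    · have h21 : ¬ p2 = p1 := fun h => h12 h.symm
      by_cases h34 : p3 = p4
      · subst h34
        by_cases h13 : p1 = p3
        · subst h13
          rw [show (fun ω => X p1 ω * X p2 ω * X p1 ω * X p1 ω)
              = fun ω => X p1 ω ^ 3 * X p2 ω ^ 1 from funext fun ω => by ring,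
            hIP p1 p2 3 1 h12, m3, zero_mul]
          simp [h12, h21]
        · by_cases h23 : p2 = p3
          · subst h23
            rw [show (fun ω => X p1 ω * X p2 ω * X p2 ω * X p2 ω)
                = fun ω => X p2 ω ^ 3 * X p1 ω ^ 1 from funext fun ω => by ring,
              hIP p2 p1 3 1 h21, m3, zero_mul]
            simp [h12, h13]
          · have h31 : ¬ p3 = p1 := fun h => h13 h.symm
            have h32 : ¬ p3 = p2 := fun h => h23 h.symm
            rw [show (fun ω => X p1 ω * X p2 ω * X p3 ω * X p3 ω)
                = fun ω => X p3 ω * X p3 ω * (X p1 ω * X p2 ω) from funext fun ω => by ring,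
              hIPmul p3 p3 p1 p2 h31 h32 h31 h32, hM2 p1 p2, if_neg h12, mul_zero]
            simp [h12, h13, h23]
      · by_cases h13 : p1 = p3
        · subst h13
          rw [show (fun ω => X p1 ω * X p2 ω * X p1 ω * X p4 ω)
              = fun ω => X p1 ω * X p1 ω * (X p2 ω * X p4 ω) from funext fun ω => by ring,
            hIPmul p1 p1 p2 p4 h12 h34 h12 h34, hM2 p1 p1, hM2 p2 p4, if_pos rfl]
          simp [h12, h34]
        · by_cases h14 : p1 = p4
          · subst h14
            have h31 : ¬ p3 = p1 := h34
            rw [show (fun ω => X p1 ω * X p2 ω * X p3 ω * X p1 ω)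
                = fun ω => X p1 ω * X p1 ω * (X p2 ω * X p3 ω) from funext fun ω => by ring,
              hIPmul p1 p1 p2 p3 h12 h13 h12 h13, hM2 p1 p1, hM2 p2 p3, if_pos rfl]
            simp [h12, h13, h34]
          · by_cases h23 : p2 = p3
            · subst h23
              rw [show (fun ω => X p1 ω * X p2 ω * X p2 ω * X p4 ω)
                  = fun ω => X p2 ω * X p2 ω * (X p1 ω * X p4 ω) from funext fun ω => by ring,
                hIPmul p2 p2 p1 p4 h21 h34 h21 h34, hM2 p1 p4, if_neg h14, mul_zero]
              simp [h12, h13, h14, h34]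
            · by_cases h24 : p2 = p4
              · subst h24
                rw [show (fun ω => X p1 ω * X p2 ω * X p3 ω * X p2 ω)
                    = fun ω => X p2 ω * X p2 ω * (X p1 ω * X p3 ω) from funext fun ω => by ring,
                  hIPmul p2 p2 p1 p3 h21 h23 h21 h23, hM2 p1 p3, if_neg h13, mul_zero]
                simp [h12, h13, h14, h23]
              · rw [show (fun ω => X p1 ω * X p2 ω * X p3 ω * X p4 ω)
                    = fun ω => X p1 ω * X p2 ω * (X p3 ω * X p4 ω) from funext fun ω => by ring,
                  hIPmul p1 p2 p3 p4 h13 h14 h23 h24, hM2 p1 p2, if_neg h12, zero_mul]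
                simp [h12, h13, h14, h23, h24, h34]
  -- value of the entries of v
  have hvx : ∀ (x : Fin n × Fin n) ω,
      v ω x = (s/(q:ℝ)) * ∑ k : Fin q, X (k, x.2) ω * X (k, x.1) ω := by
    intro x ω
    rw [hv ω]
    simp [vec', Matrix.smul_apply, Matrix.mul_apply, Matrix.transpose_apply, smul_eq_mul,
      hXdef]
  have hEv : ∀ x : Fin n × Fin n, ∫ ω, v ω x ∂μ = if x.2 = x.1 then 1 else 0 := by
    intro x
    have hfe : (fun ω => v ω x)
        = fun ω => (s/(q:ℝ)) * ∑ k : Fin q, X (k, x.2) ω * X (k, x.1) ω :=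
      funext fun ω => hvx x ω
    rw [hfe, integral_const_mul, integral_finset_sum _ (fun k _ => hInt2 _ _)]
    have h2 : ∀ k : Fin q, k ∈ Finset.univ →
        (∫ ω, X (k, x.2) ω * X (k, x.1) ω ∂μ) = if x.2 = x.1 then 1/s else 0 := by
      intro k _
      rw [hM2]
      congr 1
      simp [Prod.ext_iff]
    rw [Finset.sum_congr rfl h2, Finset.sum_const, Finset.card_univ, Fintype.card_fin,
      nsmul_eq_mul]
    by_cases hx : x.2 = x.1 <;> simp [hx] <;> field_simp
  intro a b
  have hkey : (fun ω => v ω a * v ω b) = fun ω => (s/(q:ℝ))^2 *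
      ∑ k : Fin q, ∑ k' : Fin q,
        X (k, a.2) ω * X (k, a.1) ω * X (k', b.2) ω * X (k', b.1) ω := by
    funext ω
    rw [hvx a ω, hvx b ω,
      show (s/(q:ℝ)) * (∑ k : Fin q, X (k, a.2) ω * X (k, a.1) ω)
          * ((s/(q:ℝ)) * ∑ k : Fin q, X (k, b.2) ω * X (k, b.1) ω)
        = (s/(q:ℝ))^2 * ((∑ k : Fin q, X (k, a.2) ω * X (k, a.1) ω)
          * ∑ k : Fin q, X (k, b.2) ω * X (k, b.1) ω) from by ring,
      Finset.sum_mul_sum]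
    exact congrArg _ (Finset.sum_congr rfl fun k _ => Finset.sum_congr rfl fun k' _ => by
      ring)
  have step1 : ∫ ω, v ω a * v ω b ∂μ = (s/(q:ℝ))^2 *
      ∑ k : Fin q, ∑ k' : Fin q,
        ∫ ω, X (k, a.2) ω * X (k, a.1) ω * X (k', b.2) ω * X (k', b.1) ω ∂μ := by
    rw [hkey, integral_const_mul,
      integral_finset_sum _ (fun k _ => integrable_finset_sum _ (fun k' _ => hInt4 _ _ _ _))]
    exact congrArg _ (Finset.sum_congr rfl fun k _ =>
      integral_finset_sum _ (fun k' _ => hInt4 _ _ _ _))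
  have hterm : ∀ k k' : Fin q,
      ∫ ω, X (k, a.2) ω * X (k, a.1) ω * X (k', b.2) ω * X (k', b.1) ω ∂μ =
        (if a.2 = a.1 then 1/s else 0) * (if b.2 = b.1 then 1/s else 0)
        + (if k = k' then
            (if a.2 = b.2 then 1/s else 0) * (if a.1 = b.1 then 1/s else 0)
            + (if a.2 = b.1 then 1/s else 0) * (if a.1 = b.2 then 1/s else 0)
            + (if a.2 = a.1 ∧ a.2 = b.2 ∧ a.2 = b.1 then 1/s - 3/s^2 else 0)
          else 0) := by
    intro k k'
    rw [hM4]
    by_cases hkk : k = k'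
    · subst hkk
      simp only [Prod.mk.injEq, true_and, if_true]
      ring
    · simp [Prod.mk.injEq, hkk]
  have step2 : ∫ ω, v ω a * v ω b ∂μ = (s/(q:ℝ))^2 *
      ((q:ℝ) * (q:ℝ) * ((if a.2 = a.1 then 1/s else 0) * (if b.2 = b.1 then 1/s else 0))
        + (q:ℝ) * ((if a.2 = b.2 then 1/s else 0) * (if a.1 = b.1 then 1/s else 0)
          + (if a.2 = b.1 then 1/s else 0) * (if a.1 = b.2 then 1/s else 0)
          + (if a.2 = a.1 ∧ a.2 = b.2 ∧ a.2 = b.1 then 1/s - 3/s^2 else 0))) := by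
    rw [step1,
      Finset.sum_congr rfl (fun k _ => Finset.sum_congr rfl (fun k' _ => hterm k k'))]
    congr 1
    simp [Finset.sum_add_distrib, Finset.sum_ite_eq, Finset.sum_const, Finset.card_univ,
      nsmul_eq_mul]
    split_ifs <;> ring
  have hKab : K a b = if b.2 = a.1 ∧ b.1 = a.2 then 1 else 0 := by
    have h := congrFun (hK (Matrix.single b.2 b.1 1)) a
    have h2 : ∀ p : Fin n × Fin n,
        vec' (Matrix.single b.2 b.1 (1:ℝ)) p = if p = b then 1 else 0 := by
      intro p
      simp only [vec', Matrix.single, Matrix.of_apply]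
      congr 1
      simp [Prod.ext_iff, eq_comm, and_comm]
    rw [Matrix.mulVec] at h
    simp only [dotProduct, h2, mul_ite, mul_one, mul_zero, Finset.sum_ite_eq',
      Finset.mem_univ, if_true] at h
    rw [h]
    simp [vec', Matrix.single, Matrix.transpose_apply]
  have hone : vec' (1 : Matrix (Fin n) (Fin n) ℝ) a = if a.2 = a.1 then 1 else 0 := by
    simp [vec', Matrix.one_apply]
  rw [step2, hEv a, hEv b]
  simp only [Matrix.add_apply, Matrix.smul_apply, Matrix.one_apply, Matrix.diagonal_apply,
    smul_eq_mul, hKab, hone, Prod.ext_iff]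
  exact aux_scalar hsne hqne a.1 a.2 b.1 b.2
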